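/- Let 𝒜 be irreducible with χ_p(𝒜) > 0 (p ≥ d−1). Suppose x* ≠ 0 in ℝ^d, F is a finite product of matrices from 𝒜, and ν > 0 satisfy ‖F x*‖ ≥ ν ‖x*‖. Then for every x ≠ 0 there exists a matrix L_x which is a product of at most p factors from 𝒜 ∪ {I} such that ‖F L_x x‖ ≥ ν · χ_p(𝒜) · ‖x‖, and the length of F L_x is between len(F) and len(F) + p. -/

import Mathlib

open Filter Set

/-- The set of all products of exactly `n` matrices from `𝒜`. -/
def prods {d : ℕ} (𝒜 : Set (Matrix (Fin d) (Fin d) ℝ)) (n : ℕ) :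
    Set (Matrix (Fin d) (Fin d) ℝ) :=
  {P | ∃ l : List (Matrix (Fin d) (Fin d) ℝ), l.length = n ∧ (∀ A ∈ l, A ∈ 𝒜) ∧ l.prod = P}

/-- `‖𝒜ⁿ‖`: the supremum of the norm `N` over all `n`-fold products from `𝒜`. -/
noncomputable def supN {d : ℕ} (N : Matrix (Fin d) (Fin d) ℝ → ℝ)
    (𝒜 : Set (Matrix (Fin d) (Fin d) ℝ)) (n : ℕ) : ℝ :=
  sSup (N '' prods 𝒜 n)

/-- The joint spectral radius of `𝒜` with respect to the matrix norm `N`,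
given by the generalized Gelfand formula. -/
noncomputable def jsr {d : ℕ} (N : Matrix (Fin d) (Fin d) ℝ → ℝ)
    (𝒜 : Set (Matrix (Fin d) (Fin d) ℝ)) : ℝ :=
  Filter.limsup (fun n : ℕ => (supN N 𝒜 n) ^ ((n : ℝ)⁻¹)) Filter.atTop

/-- A (matrix) norm: nonnegative, definite, absolutely homogeneous, subadditive. -/
def IsMatNorm {d : ℕ} (N : Matrix (Fin d) (Fin d) ℝ → ℝ) : Prop :=
  (∀ A, 0 ≤ N A) ∧ (∀ A, N A = 0 ↔ A = 0) ∧
  (∀ (c : ℝ) A, N (c • A) = |c| * N A) ∧ (∀ A B, N (A + B) ≤ N A + N B)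

/-- Products of at most `p` factors from `𝒜` (including the empty product `1`). -/
def prodsLe {d : ℕ} (𝒜 : Set (Matrix (Fin d) (Fin d) ℝ)) (p : ℕ) :
    Set (Matrix (Fin d) (Fin d) ℝ) :=
  ⋃ k ∈ Finset.range (p + 1), prods 𝒜 k

/-- A vector norm on `ℝ^d`: nonnegative, definite, absolutely homogeneous, subadditive. -/
def IsNorm {d : ℕ} (ν : (Fin d → ℝ) → ℝ) : Prop :=
  (∀ x, 0 ≤ ν x) ∧ (∀ x, ν x = 0 ↔ x = 0) ∧
  (∀ (a : ℝ) x, ν (a • x) = |a| * ν x) ∧ (∀ x y, ν (x + y) ≤ ν x + ν y)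

/-- Operator norm of a matrix induced by the vector norm `ν` on `ℝ^d`. -/
noncomputable def opNorm {d : ℕ} (ν : (Fin d → ℝ) → ℝ)
    (A : Matrix (Fin d) (Fin d) ℝ) : ℝ :=
  sSup ((fun x => ν (A.mulVec x)) '' {x | ν x = 1})

/-- `‖𝒜ⁿ‖` computed with the operator norm induced by `ν`. -/
noncomputable def supNu {d : ℕ} (ν : (Fin d → ℝ) → ℝ)
    (𝒜 : Set (Matrix (Fin d) (Fin d) ℝ)) (n : ℕ) : ℝ :=
  supN (opNorm ν) 𝒜 n

/-- The joint spectral radius computed with the operator norm induced by `ν`. -/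
noncomputable def jsrNu {d : ℕ} (ν : (Fin d → ℝ) → ℝ)
    (𝒜 : Set (Matrix (Fin d) (Fin d) ℝ)) : ℝ :=
  jsr (opNorm ν) 𝒜

/-- The `p`-measure of irreducibility (quasi-controllability) of `𝒜`
with respect to the vector norm `ν`:
`χ_p(𝒜) = inf_{ν x = 1} sup { t : S(t) ⊆ conv(𝒜_p(x) ∪ 𝒜_p(−x)) }`. -/
noncomputable def chi {d : ℕ} (ν : (Fin d → ℝ) → ℝ)
    (𝒜 : Set (Matrix (Fin d) (Fin d) ℝ)) (p : ℕ) : ℝ :=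
  sInf ((fun x => sSup {t : ℝ | 0 ≤ t ∧
      {y | ν y ≤ t} ⊆ convexHull ℝ
        (((fun A => A.mulVec x) '' prodsLe 𝒜 p) ∪
         ((fun A => A.mulVec (-x)) '' prodsLe 𝒜 p))}) '' {x | ν x = 1})

/-- `𝒜` is irreducible: the only common invariant subspaces are `⊥` and `⊤`. -/
def MatSetIrreducible {d : ℕ} (𝒜 : Set (Matrix (Fin d) (Fin d) ℝ)) : Prop :=
  ∀ L : Submodule ℝ (Fin d → ℝ), (∀ A ∈ 𝒜, ∀ x ∈ L, A.mulVec x ∈ L) → L = ⊥ ∨ L = ⊤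

/-!
Normalise `x` to `x̂` with `ν x̂ = 1` and choose `P ∈ 𝒜_p` maximising `M = ν (F P x̂)` (a finite
maximum). Since `ν (F ·)` is a seminorm, it is bounded by `M` on `conv (𝒜_p x̂ ∪ 𝒜_p (-x̂))`,
hence on every ball `S(t)` inside that hull; applied to the multiple of `x*` of norm `t` this
gives `c t ≤ M`. Taking the supremum over `t` and then the infimum over unit vectors,
`c χ_p(𝒜) ≤ M`, and `L_x = P` works.
-/

open Matrix

namespace IsNorm

variable {d : ℕ} {ν : (Fin d → ℝ) → ℝ}

lemma map_zero (hν : IsNorm ν) : ν 0 = 0 := (hν.2.1 0).2 rfl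

lemma map_smul (hν : IsNorm ν) (a : ℝ) (x : Fin d → ℝ) : ν (a • x) = |a| * ν x := hν.2.2.1 a x

lemma map_neg (hν : IsNorm ν) (x : Fin d → ℝ) : ν (-x) = ν x := by
  simpa using hν.map_smul (-1) x

lemma pos (hν : IsNorm ν) {x : Fin d → ℝ} (hx : x ≠ 0) : 0 < ν x :=
  (hν.1 x).lt_of_ne' (mt (hν.2.1 x).1 hx)

lemma inv_smul_self (hν : IsNorm ν) {x : Fin d → ℝ} (hx : x ≠ 0) : ν ((ν x)⁻¹ • x) = 1 := by
  rw [hν.map_smul, abs_of_pos (inv_pos.2 (hν.pos hx)), inv_mul_cancel₀ (hν.pos hx).ne']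

def toSeminorm (hν : IsNorm ν) : Seminorm ℝ (Fin d → ℝ) :=
  Seminorm.of ν hν.2.2.2 fun a x => by rw [hν.map_smul, Real.norm_eq_abs]

lemma mulVec_le_of_mem_convexHull (hν : IsNorm ν) (F : Matrix (Fin d) (Fin d) ℝ)
    {s : Set (Fin d → ℝ)} {M : ℝ} (hs : ∀ z ∈ s, ν (F *ᵥ z) ≤ M) {y : Fin d → ℝ}
    (hy : y ∈ convexHull ℝ s) : ν (F *ᵥ y) ≤ M := by
  let N := hν.toSeminorm.comp F.mulVecLin
  have hsub : s ⊆ N.closedBall 0 M := fun z hz => N.mem_closedBall_zero.2 (hs z hz)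
  exact N.mem_closedBall_zero.1 (convexHull_min hsub (N.convex_closedBall 0 M) hy)

end IsNorm

section Products

variable {d : ℕ} {𝒜 : Set (Matrix (Fin d) (Fin d) ℝ)}

lemma prods_finite (h𝒜 : 𝒜.Finite) (n : ℕ) : (prods 𝒜 n).Finite := by
  induction n with
  | zero =>
    refine (finite_singleton 1).subset ?_
    rintro P ⟨l, hl, -, rfl⟩
    simp [List.length_eq_zero_iff.mp hl]
  | succ n ih =>
    refine (h𝒜.image2 (· * ·) ih).subset ?_
    rintro P ⟨_ | ⟨A, l⟩, hl, hmem, rfl⟩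
    · simp at hl
    · exact mem_image2_of_mem (hmem A (by simp))
        ⟨l, by simpa using hl, fun B hB => hmem B (by simp [hB]), rfl⟩

lemma prodsLe_finite (h𝒜 : 𝒜.Finite) (p : ℕ) : (prodsLe 𝒜 p).Finite :=
  (Finset.range (p + 1)).finite_toSet.biUnion fun k _ => prods_finite h𝒜 k

lemma one_mem_prodsLe (p : ℕ) : (1 : Matrix (Fin d) (Fin d) ℝ) ∈ prodsLe 𝒜 p :=
  mem_biUnion (Finset.mem_range.2 p.succ_pos) ⟨[], rfl, by simp, rfl⟩

lemma exists_list_of_mem_prodsLe {p : ℕ} {P : Matrix (Fin d) (Fin d) ℝ}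
    (hP : P ∈ prodsLe 𝒜 p) : ∃ l : List (Matrix (Fin d) (Fin d) ℝ),
      (∀ A ∈ l, A ∈ 𝒜) ∧ l.length ≤ p ∧ l.prod = P := by
  obtain ⟨k, hk, l, rfl, hl𝒜, rfl⟩ := mem_iUnion₂.1 hP
  exact ⟨l, hl𝒜, Nat.lt_succ_iff.1 (Finset.mem_range.1 hk), rfl⟩

end Products

section Chi

variable {d : ℕ} {ν : (Fin d → ℝ) → ℝ} {𝒜 : Set (Matrix (Fin d) (Fin d) ℝ)} {p : ℕ}

/-- The radii `t` over which `chi` takes the inner supremum at `x`. -/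
def chiRadii (ν : (Fin d → ℝ) → ℝ) (𝒜 : Set (Matrix (Fin d) (Fin d) ℝ)) (p : ℕ)
    (x : Fin d → ℝ) : Set ℝ :=
  {t : ℝ | 0 ≤ t ∧ {y | ν y ≤ t} ⊆ convexHull ℝ
    (((fun A => A *ᵥ x) '' prodsLe 𝒜 p) ∪ ((fun A => A *ᵥ (-x)) '' prodsLe 𝒜 p))}

lemma zero_mem_chiRadii (hν : IsNorm ν) (x : Fin d → ℝ) : (0 : ℝ) ∈ chiRadii ν 𝒜 p x := by
  refine ⟨le_rfl, fun y hy => ?_⟩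
  obtain rfl : y = 0 := (hν.2.1 y).1 (le_antisymm hy (hν.1 y))
  set s := ((fun A => A *ᵥ x) '' prodsLe 𝒜 p) ∪ ((fun A => A *ᵥ (-x)) '' prodsLe 𝒜 p)
  have hx : x ∈ convexHull ℝ s :=
    subset_convexHull ℝ s (Or.inl ⟨1, one_mem_prodsLe p, one_mulVec x⟩)
  have hnx : -x ∈ convexHull ℝ s :=
    subset_convexHull ℝ s (Or.inr ⟨1, one_mem_prodsLe p, one_mulVec (-x)⟩)
  simpa using convex_convexHull ℝ _ hx hnx (by norm_num : (0 : ℝ) ≤ 1 / 2)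
    (by norm_num : (0 : ℝ) ≤ 1 / 2) (by norm_num)

lemma chi_le_of_forall_mem_chiRadii_le (hν : IsNorm ν) {x : Fin d → ℝ} (hx : ν x = 1)
    {B : ℝ} (hB : ∀ t ∈ chiRadii ν 𝒜 p x, t ≤ B) : chi ν 𝒜 p ≤ B := by
  have hbdd : BddBelow ((fun x => sSup (chiRadii ν 𝒜 p x)) '' {x | ν x = 1}) := by
    refine ⟨0, ?_⟩
    rintro _ ⟨y, -, rfl⟩
    exact Real.sSup_nonneg fun t ht => ht.1
  exact (csInf_le hbdd ⟨x, hx, rfl⟩).trans (csSup_le ⟨0, zero_mem_chiRadii hν x⟩ hB)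

lemma mul_le_of_mem_chiRadii (hν : IsNorm ν) {F : Matrix (Fin d) (Fin d) ℝ} {x : Fin d → ℝ}
    {M : ℝ} (hM : ∀ Q ∈ prodsLe 𝒜 p, ν ((F * Q) *ᵥ x) ≤ M) {t : ℝ}
    (ht : t ∈ chiRadii ν 𝒜 p x) (y : Fin d → ℝ) : t * ν (F *ᵥ y) ≤ M * ν y := by
  obtain ⟨ht0, hball⟩ := ht
  rcases eq_or_ne y 0 with rfl | hy
  · simp [hν.map_zero]
  have hyν := hν.pos hy
  have hgen : ∀ z ∈ ((fun A => A *ᵥ x) '' prodsLe 𝒜 p) ∪ ((fun A => A *ᵥ (-x)) '' prodsLe 𝒜 p),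
      ν (F *ᵥ z) ≤ M := by
    rintro _ (⟨Q, hQ, rfl⟩ | ⟨Q, hQ, rfl⟩)
    · simpa only [mulVec_mulVec] using hM Q hQ
    · simpa only [mulVec_neg, hν.map_neg, mulVec_mulVec] using hM Q hQ
  have hy' : ν ((t / ν y) • y) ≤ t := by
    rw [hν.map_smul, abs_of_nonneg (div_nonneg ht0 hyν.le), div_mul_cancel₀ _ hyν.ne']
  have hFy := hν.mulVec_le_of_mem_convexHull F hgen (hball hy')
  rwa [mulVec_smul, hν.map_smul, abs_of_nonneg (div_nonneg ht0 hyν.le),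
    div_mul_eq_mul_div, div_le_iff₀ hyν] at hFy

lemma mul_chi_le (hν : IsNorm ν) {F : Matrix (Fin d) (Fin d) ℝ} {x : Fin d → ℝ} (hx : ν x = 1)
    {M : ℝ} (hM : ∀ Q ∈ prodsLe 𝒜 p, ν ((F * Q) *ᵥ x) ≤ M) {c : ℝ} (hc : 0 < c)
    {y : Fin d → ℝ} (hy : y ≠ 0) (hF : c * ν y ≤ ν (F *ᵥ y)) : c * chi ν 𝒜 p ≤ M := by
  rw [mul_comm, ← le_div_iff₀ hc]
  refine chi_le_of_forall_mem_chiRadii_le hν hx fun t ht => ?_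
  rw [le_div_iff₀ hc]
  refine le_of_mul_le_mul_right ?_ (hν.pos hy)
  calc t * c * ν y = t * (c * ν y) := mul_assoc t c (ν y)
    _ ≤ t * ν (F *ᵥ y) := mul_le_mul_of_nonneg_left hF ht.1
    _ ≤ M * ν y := mul_le_of_mem_chiRadii hν hM ht y

end Chi

theorem statement10_general {d : ℕ} (𝒜 : Finset (Matrix (Fin d) (Fin d) ℝ))
    (ν : (Fin d → ℝ) → ℝ) (hν : IsNorm ν)
    (p : ℕ)
    (xstar : Fin d → ℝ) (hxstar : xstar ≠ 0)
    (lF : List (Matrix (Fin d) (Fin d) ℝ))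
    (c : ℝ) (hc : 0 < c)
    (hF : c * ν xstar ≤ ν (lF.prod.mulVec xstar)) :
    ∀ x : Fin d → ℝ, x ≠ 0 →
      ∃ l : List (Matrix (Fin d) (Fin d) ℝ),
        (∀ A ∈ l, A ∈ 𝒜) ∧ l.length ≤ p ∧
        lF.length ≤ (lF ++ l).length ∧ (lF ++ l).length ≤ lF.length + p ∧
        c * chi ν (↑𝒜 : Set (Matrix (Fin d) (Fin d) ℝ)) p * ν x ≤
          ν ((lF.prod * l.prod).mulVec x) := by
  intro x hx
  have hxν := hν.pos hx
  obtain ⟨P, hP, hPmax⟩ := exists_max_image _ (fun Q => ν ((lF.prod * Q) *ᵥ ((ν x)⁻¹ • x)))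
    (prodsLe_finite 𝒜.finite_toSet p) ⟨1, one_mem_prodsLe p⟩
  obtain ⟨l, hl𝒜, hlp, rfl⟩ := exists_list_of_mem_prodsLe hP
  refine ⟨l, hl𝒜, hlp, by simp, by simpa using hlp, ?_⟩
  have hchi := mul_chi_le hν (hν.inv_smul_self hx) hPmax hc hxstar hF
  rw [mulVec_smul, hν.map_smul, abs_of_pos (inv_pos.2 hxν), le_inv_mul_iff₀ hxν] at hchi
  rwa [mul_comm]

/-- growth amplification lemma: if `‖F x*‖ ≥ c ‖x*‖` for a product `F`
of matrices from `𝒜`, then for every `x ≠ 0` there is a product `L_x` of at most `p`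
factors from `𝒜 ∪ {I}` with `‖F L_x x‖ ≥ c χ_p(𝒜) ‖x‖`, and
`len F ≤ len (F L_x) ≤ len F + p`. -/
theorem statement10 {d : ℕ} (𝒜 : Finset (Matrix (Fin d) (Fin d) ℝ)) (h𝒜 : 𝒜.Nonempty)
    (ν : (Fin d → ℝ) → ℝ) (hν : IsNorm ν)
    (p : ℕ) (hp : d - 1 ≤ p)
    (hirr : MatSetIrreducible (↑𝒜 : Set (Matrix (Fin d) (Fin d) ℝ)))
    (hchi : 0 < chi ν (↑𝒜 : Set (Matrix (Fin d) (Fin d) ℝ)) p)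
    (xstar : Fin d → ℝ) (hxstar : xstar ≠ 0)
    (lF : List (Matrix (Fin d) (Fin d) ℝ)) (hlF : ∀ A ∈ lF, A ∈ 𝒜)
    (c : ℝ) (hc : 0 < c)
    (hF : c * ν xstar ≤ ν (lF.prod.mulVec xstar)) :
    ∀ x : Fin d → ℝ, x ≠ 0 →
      ∃ l : List (Matrix (Fin d) (Fin d) ℝ),
        (∀ A ∈ l, A ∈ 𝒜) ∧ l.length ≤ p ∧
        lF.length ≤ (lF ++ l).length ∧ (lF ++ l).length ≤ lF.length + p ∧
        c * chi ν (↑𝒜 : Set (Matrix (Fin d) (Fin d) ℝ)) p * ν x ≤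
          ν ((lF.prod * l.prod).mulVec x) :=
  statement10_general 𝒜 ν hν p xstar hxstar lF c hc hF
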